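/- arXiv:1809.07060 — 2 statements merged into one kernel-verified Lean document; each statement's English description precedes it below -/
import Mathlib

section
/- If f and g are moreover continuously differentiable, then h is twice differentiable, and at every point θ with f(ĥ(θ)) = f(θ) one has h″(θ) = g(θ)²·( f′(ĥ(θ))/g(ĥ(θ)) − f′(θ)/g(θ) ). -/
/-!
Write `G` for a primitive of `g`. The defining relation of `ĥ` reads `G (ĥ θ) = G θ + ℓ`, and `G`
is strictly increasing with `G' = g ≠ 0`, so the inverse function theorem makes `ĥ` differentiable
with `ĥ' = g / (g ∘ ĥ)`. Differentiating `h θ = F (ĥ θ) - F θ`, with `F' = f g`, the factor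
`g ∘ ĥ` cancels and `h' = g · (f ∘ ĥ - f)`. Differentiating once more, the term carrying `g'` is
multiplied by `f (ĥ θ) - f θ`, which vanishes at the points considered.
-/

open Filter Topology intervalIntegral

theorem StrictMono.continuousAt_of_comp {X α β : Type*} [TopologicalSpace X]
    [LinearOrder α] [TopologicalSpace α] [OrderTopology α]
    [LinearOrder β] [TopologicalSpace β] [OrderTopology β]
    {G : α → β} {φ : X → α} {a : X} (hG : StrictMono G) (h : ContinuousAt (G ∘ φ) a) :
    ContinuousAt φ a := by
  refine tendsto_order.2 ⟨fun b hb => ?_, fun b hb => ?_⟩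
  · filter_upwards [(tendsto_order.1 h).1 (G b) (hG hb)] with x hx
    exact hG.lt_iff_lt.1 hx
  · filter_upwards [(tendsto_order.1 h).2 (G b) (hG hb)] with x hx
    exact hG.lt_iff_lt.1 hx

/-- Monotonicity of `G` makes `φ` continuous, so that near `a` it agrees with the local inverse
of `G` composed with `ψ`. -/
theorem HasStrictDerivAt.hasDerivAt_of_comp_eq {G φ ψ : ℝ → ℝ} {G' ψ' a : ℝ}
    (hG : StrictMono G) (hGd : HasStrictDerivAt G G' (φ a)) (hG' : G' ≠ 0)
    (hψ : HasDerivAt ψ ψ' a) (hcomp : ∀ x, G (φ x) = ψ x) :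
    HasDerivAt φ (ψ' / G') a := by
  have hφ : ContinuousAt φ a :=
    hG.continuousAt_of_comp (by simpa only [Function.comp_def, hcomp] using hψ.continuousAt)
  have hinv := (hGd.to_localInverse hG').hasDerivAt
  rw [hcomp] at hinv
  have hloc : hGd.localInverse G G' (φ a) hG' ∘ ψ =ᶠ[𝓝 a] φ := by
    filter_upwards [hφ.eventually (hGd.eventually_left_inverse hG')] with x hx
    rwa [hcomp] at hx
  rw [div_eq_inv_mul]
  exact (hinv.comp a hψ).congr_of_eventuallyEq hloc.symm

theorem hasDerivAt_of_integral_eq_const {g φ : ℝ → ℝ} {ℓ : ℝ} (hg : Continuous g)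
    (hgpos : ∀ x, 0 < g x) (hφ : ∀ θ, ∫ s in θ..φ θ, g s = ℓ) (θ : ℝ) :
    HasDerivAt φ (g θ / g (φ θ)) θ := by
  set G : ℝ → ℝ := fun x => ∫ s in (0 : ℝ)..x, g s
  have hG : ∀ x, HasStrictDerivAt G (g x) x := hg.integral_hasStrictDerivAt 0
  have hG_mono : StrictMono G :=
    strictMono_of_deriv_pos fun x => (hG x).hasDerivAt.deriv ▸ hgpos x
  have hcomp : ∀ x, G (φ x) = G x + ℓ := fun x => by
    rw [← hφ x, ← integral_interval_sub_left (hg.intervalIntegrable _ _)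
      (hg.intervalIntegrable _ _)]
    ring
  exact (hG (φ θ)).hasDerivAt_of_comp_eq hG_mono (hgpos _).ne'
    ((hG θ).hasDerivAt.add_const ℓ) hcomp

theorem hasDerivAt_integral_upper_comp {k φ : ℝ → ℝ} {φ' θ : ℝ} (hk : Continuous k)
    (hφ : HasDerivAt φ φ' θ) :
    HasDerivAt (fun x => ∫ s in x..φ x, k s) (k (φ θ) * φ' - k θ) θ := by
  have hK : ∀ x, HasDerivAt (fun u => ∫ s in (0 : ℝ)..u, k s) (k x) x := fun x =>
    (hk.integral_hasStrictDerivAt 0 x).hasDerivAt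
  have hsub : (fun x => ∫ s in x..φ x, k s)
      = fun x => (∫ s in (0 : ℝ)..φ x, k s) - ∫ s in (0 : ℝ)..x, k s := funext fun x =>
    (integral_interval_sub_left (hk.intervalIntegrable _ _) (hk.intervalIntegrable _ _)).symm
  rw [hsub]
  exact ((hK (φ θ)).comp θ hφ).sub (hK θ)

theorem single_sensor_objective_second_deriv_general
    (g : ℝ → ℝ) (hg : ContDiff ℝ 1 g)
    (hgpos : ∀ x, 0 < g x)
    (ℓ : ℝ)
    (hhat : ℝ → ℝ)
    (hhat_int : ∀ θ, (∫ s in θ..(hhat θ), g s) = ℓ)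
    (f : ℝ → ℝ) (hf : ContDiff ℝ 1 f)
    (h : ℝ → ℝ) (hdef : ∀ θ, h θ = ∫ s in θ..(hhat θ), f s * g s) :
    (∀ θ : ℝ, DifferentiableAt ℝ h θ) ∧
    (∀ θ : ℝ, DifferentiableAt ℝ (deriv h) θ) ∧
    (∀ θ : ℝ, f (hhat θ) = f θ →
      deriv (deriv h) θ =
        g θ ^ 2 * (deriv f (hhat θ) / g (hhat θ) - deriv f θ / g θ)) := by
  have hg' : ∀ x, HasDerivAt g (deriv g x) x := fun x =>
    (hg.differentiable one_ne_zero x).hasDerivAt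
  have hf' : ∀ x, HasDerivAt f (deriv f x) x := fun x =>
    (hf.differentiable one_ne_zero x).hasDerivAt
  have hhat' := hasDerivAt_of_integral_eq_const hg.continuous hgpos hhat_int
  have hh' : ∀ θ, HasDerivAt h (g θ * (f (hhat θ) - f θ)) θ := fun θ => by
    rw [funext hdef]
    convert hasDerivAt_integral_upper_comp (k := fun s => f s * g s)
      (hf.continuous.mul hg.continuous) (hhat' θ) using 1
    field_simp [(hgpos (hhat θ)).ne']
  have hh'' : ∀ θ, HasDerivAt (deriv h) (deriv g θ * (f (hhat θ) - f θ)
      + g θ * (deriv f (hhat θ) * (g θ / g (hhat θ)) - deriv f θ)) θ := fun θ => by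
    rw [funext fun x => (hh' x).deriv]
    exact (hg' θ).mul (((hf' (hhat θ)).comp θ (hhat' θ)).sub (hf' θ))
  refine ⟨fun θ => (hh' θ).differentiableAt, fun θ => (hh'' θ).differentiableAt, ?_⟩
  intro θ hfθ
  rw [(hh'' θ).deriv, hfθ]
  field_simp [(hgpos θ).ne', (hgpos (hhat θ)).ne']
  ring

/-- If `f` and `g` are moreover continuously differentiable, then the
single-sensor objective `h(θ) = ∫_θ^{ĥ(θ)} f g` is twice differentiable, and at
every point `θ` with `f(ĥ(θ)) = f(θ)` one has
`h″(θ) = g(θ)²·( f′(ĥ(θ))/g(ĥ(θ)) − f′(θ)/g(θ) )`. -/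
theorem single_sensor_objective_second_deriv
    (g : ℝ → ℝ) (hg : ContDiff ℝ 1 g)
    (hgper : Function.Periodic g (2 * Real.pi))
    (hgpos : ∀ x, 0 < g x)
    (ℓ : ℝ) (hℓ : ℓ ∈ Set.Ioo 0 (∫ s in (0:ℝ)..(2 * Real.pi), g s))
    (hhat : ℝ → ℝ)
    (hhat_mem : ∀ θ, hhat θ ∈ Set.Ioo θ (θ + 2 * Real.pi))
    (hhat_int : ∀ θ, (∫ s in θ..(hhat θ), g s) = ℓ)
    (f : ℝ → ℝ) (hf : ContDiff ℝ 1 f)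
    (hfper : Function.Periodic f (2 * Real.pi))
    (h : ℝ → ℝ) (hdef : ∀ θ, h θ = ∫ s in θ..(hhat θ), f s * g s) :
    (∀ θ : ℝ, DifferentiableAt ℝ h θ) ∧
    (∀ θ : ℝ, DifferentiableAt ℝ (deriv h) θ) ∧
    (∀ θ : ℝ, f (hhat θ) = f θ →
      deriv (deriv h) θ =
        g θ ^ 2 * (deriv f (hhat θ) / g (hhat θ) - deriv f θ / g θ)) :=
  single_sensor_objective_second_deriv_general g hg hgpos ℓ hhat hhat_int f hf h hdef
end

section
/- First-order optimality condition for one sensor: if θ* ∈ ℝ satisfies h(θ*) ≥ h(θ) for all θ ∈ ℝ, then f(θ*) = f(ĥ(θ*)). -/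
open intervalIntegral Filter

/-!
Reparametrize by the weighted arc length `u = G θ := ∫₀^θ g`, a homeomorphism of `ℝ` because `g`
is positive and periodic. In this parameter `ĥ` becomes the shift `u ↦ u + ℓ`, and the objective
becomes `Φ (u + ℓ) - Φ u` with `Φ u := ∫₀^{G⁻¹ u} f g`, whose derivative is `f (G⁻¹ u)`. At a
maximizer the derivative of the objective vanishes, i.e. `f (ĥ θ*) = f θ*`.
-/

theorem IsLocalMax.hasDerivAt_eq_of_sub_comp_add_const {Φ : ℝ → ℝ} {a b u ℓ : ℝ}
    (hmax : IsLocalMax (fun v => Φ (v + ℓ) - Φ v) u) (ha : HasDerivAt Φ a u)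
    (hb : HasDerivAt Φ b (u + ℓ)) : b = a :=
  sub_eq_zero.mp (hmax.hasDerivAt_eq_zero ((hb.comp_add_const u ℓ).sub ha))

theorem OrderIso.hasDerivAt_symm (e : ℝ ≃o ℝ) {e' u : ℝ} (he : HasDerivAt e e' (e.symm u))
    (he' : e' ≠ 0) : HasDerivAt e.symm e'⁻¹ u :=
  he.of_local_left_inverse e.symm.continuous.continuousAt he'
    (Eventually.of_forall e.apply_symm_apply)

section Primitive

variable {g : ℝ → ℝ}

theorem strictMono_integral_of_pos (hg : Continuous g) (hgpos : ∀ x, 0 < g x) :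
    StrictMono fun x => ∫ s in (0 : ℝ)..x, g s :=
  strictMono_of_deriv_pos fun x => (hg.deriv_integral _ 0 x).symm ▸ hgpos x

theorem surjective_integral_of_periodic_of_pos {T : ℝ} (hg : Continuous g)
    (hgper : Function.Periodic g T) (hT : 0 < T) (hgpos : ∀ x, 0 < g x) :
    Function.Surjective fun x => ∫ s in (0 : ℝ)..x, g s :=
  (continuous_primitive hg.intervalIntegrable 0).surjective
    (hgper.tendsto_atTop_intervalIntegral_of_pos' (hg.intervalIntegrable 0 T) hgpos hT)
    (hgper.tendsto_atBot_intervalIntegral_of_pos' (hg.intervalIntegrable 0 T) hgpos hT)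

theorem hasDerivAt_integral_comp_symm {f : ℝ → ℝ} (hg : Continuous g) (hgpos : ∀ x, 0 < g x)
    (hf : Continuous f) (e : ℝ ≃o ℝ) (he : ⇑e = fun x => ∫ s in (0 : ℝ)..x, g s) (u : ℝ) :
    HasDerivAt (fun v => ∫ s in (0 : ℝ)..e.symm v, f s * g s) (f (e.symm u)) u := by
  have hψ : HasDerivAt e.symm (g (e.symm u))⁻¹ u :=
    e.hasDerivAt_symm (he ▸ hg.integral_hasStrictDerivAt 0 _ |>.hasDerivAt) (hgpos _).ne'
  have hF : HasDerivAt (fun x => ∫ s in (0 : ℝ)..x, f s * g s)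
      (f (e.symm u) * g (e.symm u)) (e.symm u) :=
    ((hf.mul hg).integral_hasStrictDerivAt 0 _).hasDerivAt
  have hcomp := hF.comp u hψ
  rwa [mul_inv_cancel_right₀ (hgpos _).ne'] at hcomp

end Primitive

theorem single_sensor_first_order_condition_general
    (g : ℝ → ℝ) (hg : Continuous g)
    (hgper : Function.Periodic g (2 * Real.pi))
    (hgpos : ∀ x, 0 < g x)
    (ℓ : ℝ)
    (hhat : ℝ → ℝ)
    (hhat_int : ∀ θ, (∫ s in θ..(hhat θ), g s) = ℓ)
    (f : ℝ → ℝ) (hf : Continuous f)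
    (h : ℝ → ℝ) (hdef : ∀ θ, h θ = ∫ s in θ..(hhat θ), f s * g s)
    (θstar : ℝ) (hmax : ∀ θ : ℝ, h θ ≤ h θstar) :
    f θstar = f (hhat θstar) := by
  set e : ℝ ≃o ℝ := (strictMono_integral_of_pos hg hgpos).orderIsoOfSurjective _
    (surjective_integral_of_periodic_of_pos hg hgper Real.two_pi_pos hgpos)
  have hhat_eq : ∀ θ, hhat θ = e.symm (e θ + ℓ) := fun θ => by
    rw [e.eq_symm_apply]
    show (∫ s in (0 : ℝ)..hhat θ, g s) = (∫ s in (0 : ℝ)..θ, g s) + ℓ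
    rw [← hhat_int θ]
    exact (integral_add_adjacent_intervals (hg.intervalIntegrable _ _)
      (hg.intervalIntegrable _ _)).symm
  set Φ : ℝ → ℝ := fun v => ∫ s in (0 : ℝ)..e.symm v, f s * g s
  have hh : ∀ u, h (e.symm u) = Φ (u + ℓ) - Φ u := fun u => by
    rw [hdef, hhat_eq, e.apply_symm_apply]
    exact (integral_interval_sub_left ((hf.mul hg).intervalIntegrable _ _)
      ((hf.mul hg).intervalIntegrable _ _)).symm
  have hΦmax : IsLocalMax (fun v => Φ (v + ℓ) - Φ v) (e θstar) :=
    Eventually.of_forall fun u => by simpa only [← hh, e.symm_apply_apply] using hmax (e.symm u)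
  have hΦ' := hasDerivAt_integral_comp_symm hg hgpos hf e rfl
  have hf_eq := hΦmax.hasDerivAt_eq_of_sub_comp_add_const (hΦ' _) (hΦ' _)
  rwa [← hhat_eq, e.symm_apply_apply, eq_comm] at hf_eq

/-- First-order optimality condition for one sensor: a global maximizer `θ*` of
the single-sensor objective `h` satisfies `f(θ*) = f(ĥ(θ*))`. -/
theorem single_sensor_first_order_condition
    (g : ℝ → ℝ) (hg : Continuous g)
    (hgper : Function.Periodic g (2 * Real.pi))
    (hgpos : ∀ x, 0 < g x)
    (ℓ : ℝ) (hℓ : ℓ ∈ Set.Ioo 0 (∫ s in (0:ℝ)..(2 * Real.pi), g s))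
    (hhat : ℝ → ℝ)
    (hhat_mem : ∀ θ, hhat θ ∈ Set.Ioo θ (θ + 2 * Real.pi))
    (hhat_int : ∀ θ, (∫ s in θ..(hhat θ), g s) = ℓ)
    (f : ℝ → ℝ) (hf : Continuous f)
    (hfper : Function.Periodic f (2 * Real.pi))
    (h : ℝ → ℝ) (hdef : ∀ θ, h θ = ∫ s in θ..(hhat θ), f s * g s)
    (θstar : ℝ) (hmax : ∀ θ : ℝ, h θ ≤ h θstar) :
    f θstar = f (hhat θstar) :=
  single_sensor_first_order_condition_general g hg hgper hgpos ℓ hhat hhat_int f hf h hdef θstar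
    hmax
end
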